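/- Progress for λ♦: if ∅|Σ ⊢^{dom(Σ)} t : Q, then either t is a value, or for any store σ well-typed under Σ there exist t' and σ' such that t | σ → t' | σ'. -/
import Mathlib


set_option linter.unusedVariables false

/-! A formalization of the λ♦-calculus (reachability types with a
    freshness marker), following Wei et al., "Polymorphic Reachability
    Types". -/

/-- Atoms occurring in reachability qualifiers: term variables,
    store locations, and the freshness marker ♦. -/
inductive Atom : Type
  | var : ℕ → Atom
  | loc : ℕ → Atom
  | fresh : Atom
deriving DecidableEq

/-- Reachability qualifiers: finite sets of atoms. -/
abbrev Qual := Finset Atom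

/-- Qualifier substitution q[p/x]. -/
def qsubst (q : Qual) (x : ℕ) (p : Qual) : Qual :=
  if Atom.var x ∈ q then (q.erase (Atom.var x)) ∪ p else q

/-- Qualifier growth q[p/♦]. -/
def qgrow (q p : Qual) : Qual :=
  if Atom.fresh ∈ q then q ∪ p else q

/-- Types of λ♦: base type, unit, dependent function types
    f(x : S^p) → T^r, and reference types Ref (T^p). -/
inductive Ty : Type
  | base : Ty
  | unit : Ty
  | fn (f x : ℕ) (S : Ty) (p : Qual) (T : Ty) (r : Qual) : Ty
  | ref (T : Ty) (p : Qual) : Ty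
deriving DecidableEq

/-- Qualified types T^q. -/
abbrev QTy := Ty × Qual

/-- Substitution of a qualifier for a variable inside a type. -/
def tsubst : Ty → ℕ → Qual → Ty
  | .base, _, _ => .base
  | .unit, _, _ => .unit
  | .fn f y S p T r, x, q =>
      .fn f y (tsubst S x q) (qsubst p x q) (tsubst T x q) (qsubst r x q)
  | .ref T p, x, q => .ref (tsubst T x q) (qsubst p x q)

/-- Substitution on qualified types. -/
def qtsubst (Q : QTy) (x : ℕ) (p : Qual) : QTy :=
  (tsubst Q.1 x p, qsubst Q.2 x p)

/-- Term variables mentioned in a qualifier. -/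
def qfv (q : Qual) : Finset ℕ :=
  q.biUnion (fun a => match a with | .var n => {n} | _ => ∅)

/-- Free term variables of a type (occurring in qualifiers). -/
def tfv : Ty → Finset ℕ
  | .base => ∅
  | .unit => ∅
  | .fn f x S p T r => (tfv S ∪ qfv p ∪ tfv T ∪ qfv r) \ {f, x}
  | .ref T p => tfv T ∪ qfv p

/-- Typing contexts: lists of (variable, qualified type). -/
abbrev Ctx := List (ℕ × QTy)

/-- Store typings: lists of (location, qualified type). -/
abbrev StoreTy := List (ℕ × QTy)

/-- The variables bound in a typing context, as atoms. -/
def ctxDom (Γ : Ctx) : Finset Atom := (Γ.map (fun p => Atom.var p.1)).toFinset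

/-- The locations bound in a store typing, as atoms. -/
def stDom (St : StoreTy) : Finset Atom := (St.map (fun p => Atom.loc p.1)).toFinset

/-- One-step reachability between atoms, induced by Γ and St. -/
def rstep (Γ : Ctx) (St : StoreTy) (a b : Atom) : Prop :=
  (∃ x T q, a = Atom.var x ∧ (x, (T, q)) ∈ Γ ∧ b ∈ q) ∨
  (∃ l T q, a = Atom.loc l ∧ (l, (T, q)) ∈ St ∧ b ∈ q)

/-- Saturation q*: all atoms reachable from q by the
    reflexive-transitive closure of one-step reachability. -/
def sat (Γ : Ctx) (St : StoreTy) (q : Set Atom) : Set Atom :=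
  {b | ∃ a ∈ q, Relation.ReflTransGen (rstep Γ St) a b}

/-- Qualifier overlap p ⋒ q := {♦} ∪ (p* ∩ q*). -/
def overlap (Γ : Ctx) (St : StoreTy) (p q : Set Atom) : Set Atom :=
  {Atom.fresh} ∪ (sat Γ St p ∩ sat Γ St q)

/-- Qualifier subtyping Γ|St ⊢ p <: q. -/
inductive QSub (Γ : Ctx) (St : StoreTy) : Qual → Qual → Prop
  /-- q-sub: subset inclusion within the well-scoped qualifiers. -/
  | qsub {p q : Qual} :
      p ⊆ q → q ⊆ insert Atom.fresh (ctxDom Γ ∪ stDom St) →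
      QSub Γ St p q
  /-- q-self: abstracting captured qualifiers by a self-reference. -/
  | qself {p q : Qual} {T : Ty} {f : ℕ} :
      (f, (T, q)) ∈ Γ → Atom.fresh ∉ q →
      QSub Γ St (p ∪ q ∪ {Atom.var f}) (p ∪ {Atom.var f})
  /-- q-var: one-step upcast of a variable to its assumed qualifier. -/
  | qvar {p q : Qual} {T : Ty} {x : ℕ} :
      (x, (T, q)) ∈ Γ → Atom.fresh ∉ q →
      QSub Γ St (p ∪ {Atom.var x}) (p ∪ q)
  /-- q-trans: transitivity. -/
  | qtrans {p q r : Qual} : QSub Γ St p q → QSub Γ St q r → QSub Γ St p r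

mutual
  /-- Subtyping on ordinary types Γ|St ⊢ S <: T. -/
  inductive TSub : Ctx → StoreTy → Ty → Ty → Prop
    /-- s-base -/
    | base {Γ St} : TSub Γ St .base .base
    | unit {Γ St} : TSub Γ St .unit .unit
    /-- s-ref: invariant referent. -/
    | ref {Γ St S T} {q : Qual} :
        TSub Γ St S T → TSub Γ St T S → q ⊆ ctxDom Γ ∪ stDom St →
        TSub Γ St (.ref S q) (.ref T q)
    /-- s-fun: contravariant domain, covariant dependent codomain,
        context extended with the smaller argument type and a
        ♦-qualified self-reference. -/
    | fn {Γ St} {f x : ℕ} {S1 T1 S2 T2 : Ty} {p1 r1 p2 r2 : Qual} :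
        QTSub Γ St (S2, p2) (S1, p1) →
        QTSub ((x, (S2, p2)) ::
               (f, (.fn f x S1 p1 T1 r1, {Atom.fresh})) :: Γ) St
              (T1, r1) (T2, r2) →
        TSub Γ St (.fn f x S1 p1 T1 r1) (.fn f x S2 p2 T2 r2)

  /-- Subtyping on qualified types (sq-sub). -/
  inductive QTSub : Ctx → StoreTy → QTy → QTy → Prop
    | sq {Γ St S T} {p q : Qual} :
        TSub Γ St S T → QSub Γ St p q → QTSub Γ St (S, p) (T, q)
end

/-- Terms of λ♦. -/
inductive Tm : Type
  | cst : Tm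
  | unitv : Tm
  | var (x : ℕ) : Tm
  | loc (l : ℕ) : Tm
  | abs (f x : ℕ) (t : Tm) : Tm
  | app (t1 t2 : Tm) : Tm
  | ref (t : Tm) : Tm
  | deref (t : Tm) : Tm
  | assign (t1 t2 : Tm) : Tm
deriving DecidableEq

/-- Term typing Γ|St ⊢^φ t : T^q. -/
inductive HasType : Ctx → StoreTy → Finset Atom → Tm → QTy → Prop
  /-- t-var -/
  | var {Γ St φ x T} {q : Qual} :
      (x, (T, q)) ∈ Γ → Atom.var x ∈ φ →
      HasType Γ St φ (.var x) (T, {Atom.var x})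
  /-- t-cst -/
  | cst {Γ St φ} : HasType Γ St φ .cst (.base, ∅)
  | unitv {Γ St φ} : HasType Γ St φ .unitv (.unit, ∅)
  /-- t-abs -/
  | abs {Γ St φ f x t S T} {p r q : Qual} :
      HasType ((x, (S, p)) :: (f, (.fn f x S p T r, q)) :: Γ) St
        (q ∪ {Atom.var x, Atom.var f}) t (T, r) →
      q ⊆ φ →
      HasType Γ St φ (.abs f x t) (.fn f x S p T r, q)
  /-- t-app (non-fresh argument) -/
  | app {Γ St φ t1 t2 f x S T} {p r q : Qual} :
      HasType Γ St φ t1 (.fn f x S p T r, q) →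
      HasType Γ St φ t2 (S, p) →
      Atom.fresh ∉ p →
      r ⊆ insert Atom.fresh (φ ∪ {Atom.var x, Atom.var f}) →
      HasType Γ St φ (.app t1 t2) (qtsubst (qtsubst (T, r) x p) f q)
  /-- t-app♦ (growing argument; domain is the observable overlap) -/
  | appFresh {Γ St φ t1 t2 f x S T} {d p r q : Qual} :
      HasType Γ St φ t1 (.fn f x S d T r, q) →
      HasType Γ St φ t2 (S, p) →
      (↑d : Set Atom) = overlap Γ St ↑p ↑q →
      (Atom.fresh ∈ p → x ∉ tfv T) →
      (Atom.fresh ∈ q → f ∉ tfv T) →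
      r ⊆ insert Atom.fresh (φ ∪ {Atom.var x, Atom.var f}) →
      HasType Γ St φ (.app t1 t2) (qtsubst (qtsubst (T, r) x p) f q)
  /-- t-ref -/
  | ref {Γ St φ t T} {q : Qual} :
      HasType Γ St φ t (T, q) → Atom.fresh ∉ q →
      HasType Γ St φ (.ref t) (.ref T q, insert Atom.fresh q)
  /-- t-deref -/
  | deref {Γ St φ t T} {p q : Qual} :
      HasType Γ St φ t (.ref T p, q) → Atom.fresh ∉ p → p ⊆ φ →
      HasType Γ St φ (.deref t) (T, p)
  /-- t-assgn -/
  | assign {Γ St φ t1 t2 T} {p q : Qual} :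
      HasType Γ St φ t1 (.ref T p, q) →
      HasType Γ St φ t2 (T, p) → Atom.fresh ∉ p →
      HasType Γ St φ (.assign t1 t2) (.unit, ∅)
  /-- t-sub -/
  | sub {Γ St φ t Q T} {q : Qual} :
      HasType Γ St φ t Q → QTSub Γ St Q (T, q) →
      q ⊆ insert Atom.fresh φ →
      HasType Γ St φ t (T, q)
  /-- t-loc -/
  | loc {Γ St φ l T} {q : Qual} :
      (l, (T, q)) ∈ St → q ⊆ stDom St → tfv T = ∅ →
      insert (Atom.loc l) q ⊆ φ →
      HasType Γ St φ (.loc l) (.ref T q, insert (Atom.loc l) q)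

/-- Values. -/
def IsValue : Tm → Prop
  | .cst => True
  | .unitv => True
  | .loc _ => True
  | .abs _ _ _ => True
  | _ => False

/-- Capture-avoiding-enough term substitution t[v/x] (values are closed). -/
def tmsubst : Tm → ℕ → Tm → Tm
  | .var y, x, v => if y = x then v else .var y
  | .abs f y t, x, v =>
      if f = x ∨ y = x then .abs f y t else .abs f y (tmsubst t x v)
  | .app a b, x, v => .app (tmsubst a x v) (tmsubst b x v)
  | .ref t, x, v => .ref (tmsubst t x v)
  | .deref t, x, v => .deref (tmsubst t x v)
  | .assign a b, x, v => .assign (tmsubst a x v) (tmsubst b x v)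
  | .cst, _, _ => .cst
  | .unitv, _, _ => .unitv
  | .loc l, _, _ => .loc l

/-- Runtime stores: lists of (location, value); lookup takes the
    first (most recent) binding. -/
abbrev Store := List (ℕ × Tm)

/-- Call-by-value reduction t | σ → t' | σ'. -/
inductive Step : Tm → Store → Tm → Store → Prop
  /-- β -/
  | beta {f x t v σ} : IsValue v →
      Step (.app (.abs f x t) v) σ
           (tmsubst (tmsubst t x v) f (.abs f x t)) σ
  /-- ref -/
  | ref {v σ l} : IsValue v → l ∉ σ.map Prod.fst →
      Step (.ref v) σ (.loc l) ((l, v) :: σ)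
  /-- deref -/
  | deref {l v σ} : List.lookup l σ = some v →
      Step (.deref (.loc l)) σ v σ
  /-- assign -/
  | assign {l v σ} : IsValue v → l ∈ σ.map Prod.fst →
      Step (.assign (.loc l) v) σ .unitv ((l, v) :: σ)
  /-- congruence rules (evaluation contexts) -/
  | appL {t1 σ t1' σ' t2} : Step t1 σ t1' σ' →
      Step (.app t1 t2) σ (.app t1' t2) σ'
  | appR {v t2 σ t2' σ'} : IsValue v → Step t2 σ t2' σ' →
      Step (.app v t2) σ (.app v t2') σ'
  | refC {t σ t' σ'} : Step t σ t' σ' → Step (.ref t) σ (.ref t') σ'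
  | derefC {t σ t' σ'} : Step t σ t' σ' → Step (.deref t) σ (.deref t') σ'
  | assignL {t1 σ t1' σ' t2} : Step t1 σ t1' σ' →
      Step (.assign t1 t2) σ (.assign t1' t2) σ'
  | assignR {v t2 σ t2' σ'} : IsValue v → Step t2 σ t2' σ' →
      Step (.assign v t2) σ (.assign v t2') σ'

/-- Store well-typedness ∅|St ⊢ σ. -/
def StoreWT (St : StoreTy) (σ : Store) : Prop :=
  σ.map Prod.fst = St.map Prod.fst ∧
  ∀ l v, List.lookup l σ = some v →
    ∃ T q, List.lookup l St = some (T, q) ∧ IsValue v ∧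
      HasType [] St (stDom St) v (T, q)

/-- Well-formed store typings: every entry is closed and has a
    transitively closed qualifier of store locations. -/
def WfStoreTy (St : StoreTy) : Prop :=
  ∀ l T (q : Qual), (l, (T, q)) ∈ St →
    tfv T = ∅ ∧ q ⊆ stDom St ∧ sat [] St ↑q = ↑q

/-- Substitution on typing contexts. -/
def csubst (Γ : Ctx) (x : ℕ) (p : Qual) : Ctx :=
  Γ.map (fun e => (e.1, qtsubst e.2 x p))

/-- Substitution θ = [p/x] on (possibly infinite) atom sets. -/
def ssubst (s : Set Atom) (x : ℕ) (p : Qual) : Set Atom :=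
  (s \ {Atom.var x}) ∪ {a | Atom.var x ∈ s ∧ a ∈ (p : Set Atom)}

lemma tsub_fn_inv {Γ St S f x A p B r} (h : TSub Γ St S (.fn f x A p B r)) :
    ∃ f' x' A' p' B' r', S = .fn f' x' A' p' B' r' := by
  cases h; exact ⟨_, _, _, _, _, _, rfl⟩

lemma tsub_ref_inv {Γ St S T p} (h : TSub Γ St S (.ref T p)) :
    ∃ T', S = .ref T' p := by
  cases h; exact ⟨_, rfl⟩

lemma canonical_fn {Γ St φ v Q} (h : HasType Γ St φ v Q) (hΓ : Γ = [])
    (hv : IsValue v) (hfn : ∃ f x S p B r, Q.1 = .fn f x S p B r) :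
    ∃ g y b, v = .abs g y b := by
  induction h with
  | var mem _ => subst hΓ; simp at mem
  | cst => obtain ⟨_, _, _, _, _, _, h⟩ := hfn; cases h
  | unitv => obtain ⟨_, _, _, _, _, _, h⟩ := hfn; cases h
  | abs _ _ => exact ⟨_, _, _, rfl⟩
  | loc _ _ _ _ => obtain ⟨_, _, _, _, _, _, h⟩ := hfn; cases h
  | app _ _ _ _ _ _ => simp [IsValue] at hv
  | appFresh _ _ _ _ _ _ _ _ => simp [IsValue] at hv
  | ref _ _ _ => simp [IsValue] at hv
  | deref _ _ _ _ => simp [IsValue] at hv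
  | assign _ _ _ _ _ => simp [IsValue] at hv
  | sub _ hsub _ ih =>
      cases hsub with
      | sq ts qs =>
        obtain ⟨f, x, S, p, B, r, hQ⟩ := hfn
        dsimp at hQ; subst hQ
        obtain ⟨f', x', A', p', B', r', hS⟩ := tsub_fn_inv ts
        exact ih hΓ hv ⟨f', x', A', p', B', r', by simp [hS]⟩

lemma canonical_ref {Γ St φ v Q} (h : HasType Γ St φ v Q) (hΓ : Γ = [])
    (hv : IsValue v) (href : ∃ T p, Q.1 = .ref T p) :
    ∃ l, v = .loc l ∧ l ∈ St.map Prod.fst := by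
  induction h with
  | var mem _ => subst hΓ; simp at mem
  | cst => obtain ⟨_, _, h⟩ := href; cases h
  | unitv => obtain ⟨_, _, h⟩ := href; cases h
  | abs _ _ => obtain ⟨_, _, h⟩ := href; cases h
  | loc mem _ _ _ => exact ⟨_, rfl, List.mem_map.2 ⟨_, mem, rfl⟩⟩
  | app _ _ _ _ _ _ => simp [IsValue] at hv
  | appFresh _ _ _ _ _ _ _ _ => simp [IsValue] at hv
  | ref _ _ _ => simp [IsValue] at hv
  | deref _ _ _ _ => simp [IsValue] at hv
  | assign _ _ _ _ _ => simp [IsValue] at hv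
  | sub _ hsub _ ih =>
      cases hsub with
      | sq ts qs =>
        obtain ⟨T, p, hQ⟩ := href
        dsimp at hQ; subst hQ
        obtain ⟨T', hS⟩ := tsub_ref_inv ts
        exact ih hΓ hv ⟨T', p, by simp [hS]⟩

lemma lookup_of_mem_keys {σ : Store} {l : ℕ} (h : l ∈ σ.map Prod.fst) :
    ∃ v, List.lookup l σ = some v := by
  induction σ with
  | nil => simp at h
  | cons hd tl ih =>
      by_cases he : l = hd.1
      · exact ⟨hd.2, by simp [List.lookup, he]⟩
      · have hb : (l == hd.1) = false := beq_false_of_ne he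
        have h' : l ∈ tl.map Prod.fst := by
          rcases List.mem_map.1 h with ⟨a, ha, hfst⟩
          rcases List.mem_cons.1 ha with h0 | h0
          · exact absurd (h0 ▸ hfst).symm he
          · exact List.mem_map.2 ⟨a, h0, hfst⟩
        obtain ⟨v, hv⟩ := ih h'
        exact ⟨v, by simp [List.lookup, hb, hv]⟩

lemma exists_fresh_loc (σ : Store) : ∃ l, l ∉ σ.map Prod.fst := by
  obtain ⟨l, hl⟩ := Infinite.exists_notMem_finset (σ.map Prod.fst).toFinset
  exact ⟨l, fun h => hl (List.mem_toFinset.2 h)⟩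

/-- Progress for λ♦: a closed well-typed term is a value or can step
    in any store well-typed under Σ. -/
theorem lambda_diamond_progress
    (St : StoreTy) (t : Tm) (Q : QTy)
    (h : HasType [] St (stDom St) t Q) :
    IsValue t ∨
      ∀ σ : Store, StoreWT St σ →
        ∃ t' σ', Step t σ t' σ' := by
  generalize hΓ : ([] : Ctx) = Γ at h
  generalize hφ : stDom St = φ at h
  induction h with
  | var mem _ => subst hΓ; simp at mem
  | cst => left; trivial
  | unitv => left; trivial
  | abs _ _ => left; trivial
  | loc _ _ _ _ => left; trivial
  | app h1 h2 _ _ ih1 ih2 =>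
      right; intro σ hσ
      rcases ih1 hΓ hφ with hv1 | hs1
      · rcases ih2 hΓ hφ with hv2 | hs2
        · obtain ⟨g, y, b, rfl⟩ := canonical_fn h1 hΓ.symm hv1 ⟨_, _, _, _, _, _, rfl⟩
          exact ⟨_, _, Step.beta hv2⟩
        · obtain ⟨t2', σ', hs⟩ := hs2 σ hσ
          exact ⟨_, _, Step.appR hv1 hs⟩
      · obtain ⟨t1', σ', hs⟩ := hs1 σ hσ
        exact ⟨_, _, Step.appL hs⟩
  | appFresh h1 h2 _ _ _ _ ih1 ih2 =>
      right; intro σ hσ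
      rcases ih1 hΓ hφ with hv1 | hs1
      · rcases ih2 hΓ hφ with hv2 | hs2
        · obtain ⟨g, y, b, rfl⟩ := canonical_fn h1 hΓ.symm hv1 ⟨_, _, _, _, _, _, rfl⟩
          exact ⟨_, _, Step.beta hv2⟩
        · obtain ⟨t2', σ', hs⟩ := hs2 σ hσ
          exact ⟨_, _, Step.appR hv1 hs⟩
      · obtain ⟨t1', σ', hs⟩ := hs1 σ hσ
        exact ⟨_, _, Step.appL hs⟩
  | ref h1 _ ih =>
      right; intro σ hσ
      rcases ih hΓ hφ with hv | hs
      · obtain ⟨l, hl⟩ := exists_fresh_loc σ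
        exact ⟨_, _, Step.ref hv hl⟩
      · obtain ⟨t', σ', hs'⟩ := hs σ hσ
        exact ⟨_, _, Step.refC hs'⟩
  | deref h1 _ _ ih =>
      right; intro σ hσ
      rcases ih hΓ hφ with hv | hs
      · obtain ⟨l, rfl, hmem⟩ := canonical_ref h1 hΓ.symm hv ⟨_, _, rfl⟩
        obtain ⟨v, hv'⟩ := lookup_of_mem_keys (σ := σ) (hσ.1 ▸ hmem)
        exact ⟨_, _, Step.deref hv'⟩
      · obtain ⟨t', σ', hs'⟩ := hs σ hσ
        exact ⟨_, _, Step.derefC hs'⟩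
  | assign h1 h2 _ ih1 ih2 =>
      right; intro σ hσ
      rcases ih1 hΓ hφ with hv1 | hs1
      · rcases ih2 hΓ hφ with hv2 | hs2
        · obtain ⟨l, rfl, hmem⟩ := canonical_ref h1 hΓ.symm hv1 ⟨_, _, rfl⟩
          exact ⟨_, _, Step.assign hv2 (hσ.1 ▸ hmem)⟩
        · obtain ⟨t2', σ', hs⟩ := hs2 σ hσ
          exact ⟨_, _, Step.assignR hv1 hs⟩
      · obtain ⟨t1', σ', hs⟩ := hs1 σ hσ
        exact ⟨_, _, Step.assignL hs⟩
  | sub _ _ _ ih => exact ih hΓ hφ
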